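/- On H ⊗ H ⊗ H one has the identity F₁₂ ∘ F₁₃ ∘ F₂₃ = F₂₃ ∘ F₁₂, where Fᵢⱼ denotes the Fourier transform F applied to the i-th and j-th tensor factors. -/
import Mathlib


/-!
STATEMENT 3: On `H ⊗ H ⊗ H` one has `F₁₂ ∘ F₁₃ ∘ F₂₃ = F₂₃ ∘ F₁₂`, where `F` is the
Fourier transform `F(f ⊗ g) = f·S(g₍₁₎) ⊗ g₍₂₎` and `Fᵢⱼ` acts on the `i`-th and `j`-th
tensor factors and identically on the remaining one.
-/

open TensorProduct

noncomputable section

variable (k H : Type*) [Field k] [Ring H] [HopfAlgebra k H]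

/-- The Fourier transform `F(f ⊗ g) = f·S(g₍₁₎) ⊗ g₍₂₎`. -/
def fourierF : H ⊗[k] H →ₗ[k] H ⊗[k] H :=
  (LinearMap.rTensor H (LinearMap.mul' k H))
    ∘ₗ (TensorProduct.assoc k H H H).symm.toLinearMap
    ∘ₗ (LinearMap.lTensor H
        ((LinearMap.rTensor H (HopfAlgebra.antipode (R := k))) ∘ₗ
          (Coalgebra.comul : H →ₗ[k] H ⊗[k] H)))

/-- `F₁₂ = F ⊗ id` on `(H ⊗ H) ⊗ H`. -/
def F12 : (H ⊗[k] H) ⊗[k] H →ₗ[k] (H ⊗[k] H) ⊗[k] H :=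
  LinearMap.rTensor H (fourierF k H)

/-- `F₂₃ = id ⊗ F` on `(H ⊗ H) ⊗ H`. -/
def F23 : (H ⊗[k] H) ⊗[k] H →ₗ[k] (H ⊗[k] H) ⊗[k] H :=
  (TensorProduct.assoc k H H H).symm.toLinearMap
    ∘ₗ LinearMap.lTensor H (fourierF k H)
    ∘ₗ (TensorProduct.assoc k H H H).toLinearMap

/-- The transposition of the second and third tensor factors of `(H ⊗ H) ⊗ H`. -/
def swap23 : (H ⊗[k] H) ⊗[k] H →ₗ[k] (H ⊗[k] H) ⊗[k] H :=
  (TensorProduct.assoc k H H H).symm.toLinearMap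
    ∘ₗ LinearMap.lTensor H (TensorProduct.comm k H H).toLinearMap
    ∘ₗ (TensorProduct.assoc k H H H).toLinearMap

/-- `F₁₃`: the Fourier transform applied to the first and third tensor factors. -/
def F13 : (H ⊗[k] H) ⊗[k] H →ₗ[k] (H ⊗[k] H) ⊗[k] H :=
  swap23 k H ∘ₗ F12 k H ∘ₗ swap23 k H

/-! ### Auxiliary development -/

open Coalgebra HopfAlgebra LinearMap

set_option synthInstance.maxHeartbeats 400000
set_option maxHeartbeats 1000000

/-- `β : H ⊗ (H ⊗ H) → H ⊗ H`, `x ⊗ (c₁ ⊗ c₂) ↦ (x·c₁) ⊗ c₂`. -/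
def betaMap : H ⊗[k] (H ⊗[k] H) →ₗ[k] H ⊗[k] H :=
  (LinearMap.rTensor H (LinearMap.mul' k H))
    ∘ₗ (TensorProduct.assoc k H H H).symm.toLinearMap

/-- The inverse Fourier transform `G(f ⊗ g) = f·g₍₁₎ ⊗ g₍₂₎`. -/
def fourierG : H ⊗[k] H →ₗ[k] H ⊗[k] H :=
  betaMap k H ∘ₗ (LinearMap.lTensor H (Coalgebra.comul : H →ₗ[k] H ⊗[k] H))

def G12 : (H ⊗[k] H) ⊗[k] H →ₗ[k] (H ⊗[k] H) ⊗[k] H :=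
  LinearMap.rTensor H (fourierG k H)

def G23 : (H ⊗[k] H) ⊗[k] H →ₗ[k] (H ⊗[k] H) ⊗[k] H :=
  (TensorProduct.assoc k H H H).symm.toLinearMap
    ∘ₗ LinearMap.lTensor H (fourierG k H)
    ∘ₗ (TensorProduct.assoc k H H H).toLinearMap

def G13 : (H ⊗[k] H) ⊗[k] H →ₗ[k] (H ⊗[k] H) ⊗[k] H :=
  swap23 k H ∘ₗ G12 k H ∘ₗ swap23 k H

variable {k H}

@[simp] lemma betaMap_tmul (x c₁ c₂ : H) :
    betaMap k H (x ⊗ₜ (c₁ ⊗ₜ c₂)) = (x * c₁) ⊗ₜ[k] c₂ := by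
  simp [betaMap]

lemma betaMap_tmul_mul (x : H) (u : H ⊗[k] H) :
    betaMap k H (x ⊗ₜ u) = ((x ⊗ₜ[k] (1 : H)) : H ⊗[k] H) * u := by
  induction u using TensorProduct.induction_on with
  | zero => simp [tmul_zero]
  | tmul a b => simp [Algebra.TensorProduct.tmul_mul_tmul]
  | add a b ha hb => simp [tmul_add, ha, hb, mul_add]

lemma fourierF_tmul (f g : H) :
    fourierF k H (f ⊗ₜ g) =
      betaMap k H (f ⊗ₜ (LinearMap.rTensor H (antipode (R := k)) (comul g))) := rfl

lemma fourierG_tmul (f g : H) :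
    fourierG k H (f ⊗ₜ g) = betaMap k H (f ⊗ₜ (comul g)) := rfl

lemma swap23_tmul (x y z : H) :
    swap23 k H ((x ⊗ₜ y) ⊗ₜ z) = (x ⊗ₜ z) ⊗ₜ[k] y := by
  simp [swap23]

lemma F12_tmul (x : H ⊗[k] H) (z : H) : F12 k H (x ⊗ₜ z) = fourierF k H x ⊗ₜ z := rfl
lemma G12_tmul (x : H ⊗[k] H) (z : H) : G12 k H (x ⊗ₜ z) = fourierG k H x ⊗ₜ z := rfl

lemma F23_tmul (x y z : H) :
    F23 k H ((x ⊗ₜ y) ⊗ₜ z) =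
      (TensorProduct.assoc k H H H).symm (x ⊗ₜ fourierF k H (y ⊗ₜ z)) := rfl

lemma G23_tmul (x y z : H) :
    G23 k H ((x ⊗ₜ y) ⊗ₜ z) =
      (TensorProduct.assoc k H H H).symm (x ⊗ₜ fourierG k H (y ⊗ₜ z)) := rfl

/-- Compatibility of maps of the form `β ∘ (id ⊗ θ)` with `β`. -/
lemma betaMap_comp_apply (θ : H →ₗ[k] H ⊗[k] H) (x : H) (c : H ⊗[k] H) :
    (betaMap k H ∘ₗ LinearMap.lTensor H θ) (betaMap k H (x ⊗ₜ c)) =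
      betaMap k H (x ⊗ₜ ((betaMap k H ∘ₗ LinearMap.lTensor H θ) c)) := by
  induction c using TensorProduct.induction_on with
  | zero => simp [tmul_zero]
  | tmul c₁ c₂ =>
      simp only [betaMap_tmul, LinearMap.comp_apply, LinearMap.lTensor_tmul]
      generalize θ c₂ = d
      induction d using TensorProduct.induction_on with
      | zero => simp [tmul_zero]
      | tmul d₁ d₂ => simp [mul_assoc]
      | add a b ha hb => simp only [tmul_add, map_add, ha, hb]
  | add a b ha hb => simp only [tmul_add, map_add, ha, hb]

lemma fourierG_rTensor_antipode_comul (g : H) :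
    fourierG k H (LinearMap.rTensor H (antipode (R := k)) (comul g)) = (1 : H) ⊗ₜ[k] g := by
  have step1 : ∀ c : H ⊗[k] H,
      fourierG k H (LinearMap.rTensor H (antipode (R := k)) c) =
        betaMap k H (LinearMap.rTensor (H ⊗[k] H) (antipode (R := k))
          (LinearMap.lTensor H (comul (R := k)) c)) := by
    intro c
    induction c using TensorProduct.induction_on with
    | zero => simp
    | tmul a b => simp [fourierG_tmul]
    | add a b ha hb => simp only [map_add, ha, hb]
  rw [step1, ← Coalgebra.coassoc_apply]
  have step2 : ∀ t : (H ⊗[k] H) ⊗[k] H,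
      betaMap k H (LinearMap.rTensor (H ⊗[k] H) (antipode (R := k))
          (TensorProduct.assoc k H H H t)) =
        LinearMap.rTensor H
          (LinearMap.mul' k H ∘ₗ LinearMap.rTensor H (antipode (R := k))) t := by
    intro t
    induction t using TensorProduct.induction_on with
    | zero => simp only [map_zero]
    | tmul a z =>
        induction a using TensorProduct.induction_on with
        | zero => simp only [zero_tmul, map_zero]
        | tmul x y => simp
        | add a b ha hb => simp only [add_tmul, map_add, ha, hb]
    | add a b ha hb => simp only [map_add, ha, hb]
  rw [step2, ← LinearMap.rTensor_comp_apply, LinearMap.comp_assoc,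
    HopfAlgebra.mul_antipode_rTensor_comul]
  rw [LinearMap.rTensor_comp_apply, Coalgebra.rTensor_counit_comul]
  simp [Algebra.linearMap_apply]

lemma fourierF_comul (g : H) :
    fourierF k H (comul g) = (1 : H) ⊗ₜ[k] g := by
  have hF : fourierF k H = betaMap k H ∘ₗ
      LinearMap.lTensor H (LinearMap.rTensor H (antipode (R := k)) ∘ₗ comul) := rfl
  rw [hF, LinearMap.comp_apply, LinearMap.lTensor_comp, LinearMap.comp_apply,
    ← Coalgebra.coassoc_apply]
  have step2 : ∀ t : (H ⊗[k] H) ⊗[k] H,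
      betaMap k H (LinearMap.lTensor H (LinearMap.rTensor H (antipode (R := k)))
          (TensorProduct.assoc k H H H t)) =
        LinearMap.rTensor H
          (LinearMap.mul' k H ∘ₗ LinearMap.lTensor H (antipode (R := k))) t := by
    intro t
    induction t using TensorProduct.induction_on with
    | zero => simp only [map_zero]
    | tmul a z =>
        induction a using TensorProduct.induction_on with
        | zero => simp only [zero_tmul, map_zero]
        | tmul x y => simp
        | add a b ha hb => simp only [add_tmul, map_add, ha, hb]
    | add a b ha hb => simp only [map_add, ha, hb]
  rw [step2, ← LinearMap.rTensor_comp_apply, LinearMap.comp_assoc,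
    HopfAlgebra.mul_antipode_lTensor_comul]
  rw [LinearMap.rTensor_comp_apply, Coalgebra.rTensor_counit_comul]
  simp [Algebra.linearMap_apply]

lemma fourierG_fourierF_apply (x : H ⊗[k] H) :
    fourierG k H (fourierF k H x) = x := by
  induction x using TensorProduct.induction_on with
  | zero => simp only [map_zero]
  | tmul f g =>
      have hG : fourierG k H = betaMap k H ∘ₗ
          LinearMap.lTensor H (Coalgebra.comul (R := k) (A := H)) := rfl
      rw [fourierF_tmul, hG, betaMap_comp_apply, ← hG,
        fourierG_rTensor_antipode_comul, betaMap_tmul]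
      rw [mul_one]
  | add a b ha hb => simp only [map_add, ha, hb]

lemma fourierF_fourierG_apply (x : H ⊗[k] H) :
    fourierF k H (fourierG k H x) = x := by
  induction x using TensorProduct.induction_on with
  | zero => simp only [map_zero]
  | tmul f g =>
      have hF : fourierF k H = betaMap k H ∘ₗ
          LinearMap.lTensor H (LinearMap.rTensor H (antipode (R := k)) ∘ₗ comul) := rfl
      rw [fourierG_tmul, hF, betaMap_comp_apply, ← hF, fourierF_comul, betaMap_tmul]
      rw [mul_one]
  | add a b ha hb => simp only [map_add, ha, hb]

lemma GF_comp : fourierG k H ∘ₗ fourierF k H = LinearMap.id :=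
  LinearMap.ext fourierG_fourierF_apply

lemma FG_comp : fourierF k H ∘ₗ fourierG k H = LinearMap.id :=
  LinearMap.ext fourierF_fourierG_apply

lemma G12_F12_apply (x : (H ⊗[k] H) ⊗[k] H) : G12 k H (F12 k H x) = x := by
  rw [G12, F12, ← LinearMap.rTensor_comp_apply, GF_comp, LinearMap.rTensor_id,
    LinearMap.id_apply]

lemma F12_G12_apply (x : (H ⊗[k] H) ⊗[k] H) : F12 k H (G12 k H x) = x := by
  rw [G12, F12, ← LinearMap.rTensor_comp_apply, FG_comp, LinearMap.rTensor_id,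
    LinearMap.id_apply]

lemma swap23_swap23 (x : (H ⊗[k] H) ⊗[k] H) : swap23 k H (swap23 k H x) = x := by
  induction x using TensorProduct.induction_on with
  | zero => simp only [map_zero]
  | tmul a z =>
      induction a using TensorProduct.induction_on with
      | zero => simp only [zero_tmul, map_zero]
      | tmul x y => rw [swap23_tmul, swap23_tmul]
      | add a b ha hb => simp only [add_tmul, map_add, ha, hb]
  | add a b ha hb => simp only [map_add, ha, hb]

lemma G13_F13_apply (x : (H ⊗[k] H) ⊗[k] H) : G13 k H (F13 k H x) = x := by
  simp only [G13, F13, LinearMap.comp_apply, swap23_swap23, G12_F12_apply]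

lemma F13_G13_apply (x : (H ⊗[k] H) ⊗[k] H) : F13 k H (G13 k H x) = x := by
  simp only [G13, F13, LinearMap.comp_apply, swap23_swap23, F12_G12_apply]

lemma G23_F23_apply (x : (H ⊗[k] H) ⊗[k] H) : G23 k H (F23 k H x) = x := by
  simp only [G23, F23, LinearMap.comp_apply, LinearEquiv.coe_coe,
    LinearEquiv.apply_symm_apply, ← LinearMap.lTensor_comp_apply, GF_comp,
    LinearMap.lTensor_id, LinearMap.id_apply, LinearEquiv.symm_apply_apply]

lemma F23_G23_apply (x : (H ⊗[k] H) ⊗[k] H) : F23 k H (G23 k H x) = x := by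
  simp only [G23, F23, LinearMap.comp_apply, LinearEquiv.coe_coe,
    LinearEquiv.apply_symm_apply, ← LinearMap.lTensor_comp_apply, FG_comp,
    LinearMap.lTensor_id, LinearMap.id_apply, LinearEquiv.symm_apply_apply]

lemma mulLeft_add' (a b : H ⊗[k] H) :
    LinearMap.mulLeft k (a + b) = LinearMap.mulLeft k a + LinearMap.mulLeft k b := by
  ext x; simp [add_mul]

lemma sublemma_a (f g : H) (c : H ⊗[k] H) :
    G12 k H ((TensorProduct.assoc k H H H).symm (f ⊗ₜ betaMap k H (g ⊗ₜ c))) =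
      LinearMap.rTensor H (LinearMap.mulLeft k ((f ⊗ₜ[k] (1 : H)) * comul g))
        (LinearMap.rTensor H (Coalgebra.comul (R := k) (A := H)) c) := by
  induction c using TensorProduct.induction_on with
  | zero => simp only [map_zero, tmul_zero]
  | tmul c₁ c₂ =>
      rw [betaMap_tmul, assoc_symm_tmul, G12_tmul, fourierG_tmul,
        Bialgebra.comul_mul, betaMap_tmul_mul, LinearMap.rTensor_tmul,
        LinearMap.rTensor_tmul, LinearMap.mulLeft_apply, mul_assoc]
  | add a b ha hb => simp only [map_add, tmul_add, ha, hb]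

lemma sublemma_b2 (p q c₁ : H) (d : H ⊗[k] H) :
    (TensorProduct.assoc k H H H).symm ((p * c₁) ⊗ₜ betaMap k H (q ⊗ₜ d)) =
      LinearMap.rTensor H (LinearMap.mulLeft k (p ⊗ₜ[k] q))
        ((TensorProduct.assoc k H H H).symm (c₁ ⊗ₜ d)) := by
  induction d using TensorProduct.induction_on with
  | zero => simp only [map_zero, tmul_zero]
  | tmul d₁ d₂ =>
      rw [betaMap_tmul, assoc_symm_tmul, assoc_symm_tmul, LinearMap.rTensor_tmul,
        LinearMap.mulLeft_apply, Algebra.TensorProduct.tmul_mul_tmul]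
  | add a b ha hb => simp only [map_add, tmul_add, ha, hb]

lemma sublemma_b1 (p q : H) (c : H ⊗[k] H) :
    G23 k H (swap23 k H ((betaMap k H (p ⊗ₜ c)) ⊗ₜ q)) =
      LinearMap.rTensor H (LinearMap.mulLeft k (p ⊗ₜ[k] q))
        ((TensorProduct.assoc k H H H).symm
          (LinearMap.lTensor H (Coalgebra.comul (R := k) (A := H)) c)) := by
  induction c using TensorProduct.induction_on with
  | zero => simp only [map_zero, tmul_zero, zero_tmul]
  | tmul c₁ c₂ =>
      rw [betaMap_tmul, swap23_tmul, G23_tmul, fourierG_tmul,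
        LinearMap.lTensor_tmul, sublemma_b2]
  | add a b ha hb => simp only [map_add, tmul_add, add_tmul, ha, hb]

lemma sublemma_b (u : H ⊗[k] H) (h : H) :
    G23 k H (G13 k H (u ⊗ₜ h)) =
      LinearMap.rTensor H (LinearMap.mulLeft k u)
        ((TensorProduct.assoc k H H H).symm
          (LinearMap.lTensor H (Coalgebra.comul (R := k) (A := H)) (comul h))) := by
  induction u using TensorProduct.induction_on with
  | zero =>
      simp only [zero_tmul, map_zero, LinearMap.mulLeft_zero_eq_zero,
        LinearMap.rTensor_zero, LinearMap.zero_apply]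
  | tmul p q =>
      have : G13 k H ((p ⊗ₜ[k] q) ⊗ₜ h) =
          swap23 k H ((betaMap k H (p ⊗ₜ comul h)) ⊗ₜ q) := by
        rw [G13, LinearMap.comp_apply, LinearMap.comp_apply, swap23_tmul,
          G12_tmul, fourierG_tmul]
      rw [this, sublemma_b1]
  | add a b ha hb =>
      simp only [add_tmul, map_add, ha, hb, mulLeft_add', LinearMap.rTensor_add,
        LinearMap.add_apply]

lemma Gpent : G23 k H ∘ₗ G13 k H ∘ₗ G12 k H = G12 k H ∘ₗ G23 k H := by
  apply TensorProduct.ext'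
  intro x h
  induction x using TensorProduct.induction_on with
  | zero => simp only [zero_tmul, map_zero]
  | tmul f g =>
      simp only [LinearMap.comp_apply]
      rw [G12_tmul, fourierG_tmul, sublemma_b, betaMap_tmul_mul,
        G23_tmul, fourierG_tmul, sublemma_a, Coalgebra.coassoc_symm_apply]
  | add a b ha hb => simp only [add_tmul, map_add, ha, hb]

/-- The pentagon-type identity `F₁₂ F₁₃ F₂₃ = F₂₃ F₁₂` for the Fourier transform. -/
theorem fourier_F12_F13_F23 :
    F12 k H ∘ₗ F13 k H ∘ₗ F23 k H = F23 k H ∘ₗ F12 k H := by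
  apply LinearMap.ext
  intro y
  have inj : Function.Injective
      (fun x : (H ⊗[k] H) ⊗[k] H => G23 k H (G13 k H (G12 k H x))) := by
    intro a b hab
    have := congrArg (fun x => F12 k H (F13 k H (F23 k H x))) hab
    simpa only [F23_G23_apply, F13_G13_apply, F12_G12_apply] using this
  apply inj
  simp only [LinearMap.comp_apply]
  rw [G12_F12_apply, G13_F13_apply, G23_F23_apply]
  have hp := LinearMap.congr_fun (Gpent (k := k) (H := H)) (F23 k H (F12 k H y))
  simp only [LinearMap.comp_apply] at hp
  rw [hp, G23_F23_apply, G12_F12_apply]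

end
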